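/- For the inverse log-polynomial spectrum λ_k = 1/(k log^β(k+1)) with β > 1 and constant c₁ > 0, the effective dimension k₁(n) = min{ l ≥ 0 : λ_{l+1} ≤ c₁(Σ_{i≥1}λ_i)/n } satisfies k₁(n) = Θ(n / log^β n). -/

import Mathlib

open Real Filter

/-! Since `λ_{l+1} = 1 / logPoly β l`, `k₁(n) = effectiveDim β B n` with `B = c₁ Σ λ` (finite by
Cauchy condensation): the least `l` with `n ≤ B (l + 1) log^β (l + 2)`. Eventually `log^β n ≤ √n`,
so every `l ≥ C n / log^β n` is at least `√n`, has `log (l + 2) ≥ (log n) / 2`, and therefore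
solves the inequality once `B C ≥ 2^β`. Conversely a solution with `l + 2 ≤ n` satisfies
`n ≤ B (l + 1) log^β n`, and one with `l + 2 > n` is already of size `n`. -/

noncomputable def logPoly (β x : ℝ) : ℝ := (x + 1) * log (x + 2) ^ β

noncomputable def effectiveDim (β B y : ℝ) : ℕ := sInf {l : ℕ | y ≤ B * logPoly β l}

variable {β : ℝ}

lemma log_add_two_pos {x : ℝ} (hx : 0 ≤ x) : 0 < log (x + 2) := log_pos (by linarith)

lemma logPoly_pos (β : ℝ) {x : ℝ} (hx : 0 ≤ x) : 0 < logPoly β x :=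
  mul_pos (by linarith) (rpow_pos_of_pos (log_add_two_pos hx) β)

lemma logPoly_le_logPoly (hβ : 0 ≤ β) {x y : ℝ} (hx : 0 ≤ x) (hxy : x ≤ y) :
    logPoly β x ≤ logPoly β y := by
  have := log_add_two_pos hx
  unfold logPoly
  gcongr
  linarith

lemma mul_one_div_logPoly_le (hβ : 0 ≤ β) {x : ℝ} (hx : 1 < x) :
    x * (1 / logPoly β x) ≤ (log x ^ β)⁻¹ := by
  rw [mul_one_div, ← one_div, div_le_div_iff₀ (logPoly_pos β (by linarith))
    (rpow_pos_of_pos (log_pos hx) β), one_mul]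
  have := (log_pos hx).le
  unfold logPoly
  gcongr <;> linarith

lemma summable_one_div_logPoly (hβ : 1 < β) : Summable fun l : ℕ => 1 / logPoly β l := by
  have hβ0 : 0 ≤ β := by linarith
  have hanti : ∀ ⦃m n : ℕ⦄, 0 < m → m ≤ n → 1 / logPoly β n ≤ 1 / logPoly β m :=
    fun m n _ hmn => one_div_le_one_div_of_le (logPoly_pos β m.cast_nonneg)
      (logPoly_le_logPoly hβ0 m.cast_nonneg (by exact_mod_cast hmn))
  rw [← summable_condensed_iff_of_nonneg
    (fun l => (one_div_pos.2 (logPoly_pos β l.cast_nonneg)).le) hanti, ← summable_nat_add_iff 1]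
  have hdom : Summable fun k : ℕ => (((k + 1 : ℕ) : ℝ) ^ β)⁻¹ * (log 2 ^ β)⁻¹ :=
    ((summable_nat_add_iff 1).2 (summable_nat_rpow_inv.2 hβ)).mul_right _
  refine hdom.of_nonneg_of_le (fun k => ?_) (fun k => ?_)
  · have := logPoly_pos β (2 ^ (k + 1) : ℕ).cast_nonneg
    positivity
  · have hx : (1 : ℝ) < 2 ^ (k + 1) := one_lt_pow₀ one_lt_two k.succ_ne_zero
    calc _ ≤ (log (2 ^ (k + 1)) ^ β)⁻¹ := by
          push_cast
          exact mul_one_div_logPoly_le hβ0 hx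
      _ = _ := by rw [log_pow, mul_rpow (by positivity) (log_pos one_lt_two).le, mul_inv]

lemma tsum_one_div_logPoly_pos (hβ : 1 < β) : 0 < ∑' l : ℕ, 1 / logPoly β l :=
  (summable_one_div_logPoly hβ).tsum_pos
    (fun l => (one_div_pos.2 (logPoly_pos β l.cast_nonneg)).le) 0
    (one_div_pos.2 (logPoly_pos β (Nat.cast_nonneg 0)))

lemma one_div_logPoly_le_div_iff {B y x : ℝ} (hy : 0 < y) (hx : 0 ≤ x) :
    1 / logPoly β x ≤ B / y ↔ y ≤ B * logPoly β x := by
  rw [div_le_div_iff₀ (logPoly_pos β hx) hy, one_mul]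

lemma one_le_log_of_three_le {x : ℝ} (hx : 3 ≤ x) : 1 ≤ log x := by
  rw [le_log_iff_exp_le (by linarith)]
  linarith [exp_one_lt_three]

lemma eventually_log_rpow_le_sqrt (β : ℝ) : ∀ᶠ x : ℝ in atTop, log x ^ β ≤ √x := by
  filter_upwards [(isLittleO_log_rpow_rpow_atTop β one_half_pos).bound one_pos,
    eventually_ge_atTop 1] with x hx hx1
  rwa [one_mul, norm_of_nonneg (rpow_nonneg (log_nonneg hx1) _),
    norm_of_nonneg (by positivity), ← sqrt_eq_rpow] at hx

lemma log_rpow_le_two_rpow_mul_log_rpow (hβ : 0 ≤ β) {y z : ℝ} (hy : 1 ≤ y) (h : √y ≤ z) :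
    log y ^ β ≤ 2 ^ β * log z ^ β := by
  have hsqrt : 0 < √y := sqrt_pos.2 (by linarith)
  have hlog : log y ≤ 2 * log z := by
    have := log_le_log hsqrt h
    rw [log_sqrt (by linarith)] at this
    linarith
  have hz : 0 ≤ log z := log_nonneg ((one_le_sqrt.2 hy).trans h)
  rw [← mul_rpow zero_le_two hz]
  exact rpow_le_rpow (log_nonneg hy) hlog hβ

lemma sqrt_le_div_log_rpow {y : ℝ} (hy : 1 < y) (hLs : log y ^ β ≤ √y) :
    √y ≤ y / log y ^ β := by
  rw [le_div_iff₀ (rpow_pos_of_pos (log_pos hy) β)]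
  calc √y * log y ^ β ≤ √y * √y := by gcongr
    _ = y := mul_self_sqrt (by linarith)

lemma natCeil_mul_le_add_one_mul {C q : ℝ} (hC : 0 ≤ C) (hq : 1 ≤ q) :
    (⌈C * q⌉₊ : ℝ) ≤ (C + 1) * q := by
  have := Nat.ceil_lt_add_one (mul_nonneg hC (by linarith : 0 ≤ q))
  linarith

lemma le_mul_logPoly_effectiveDim (hβ : 0 ≤ β) {B : ℝ} (hB : 0 < B) (y : ℝ) :
    y ≤ B * logPoly β (effectiveDim β B y) := by
  refine Nat.sInf_mem (s := {l : ℕ | y ≤ B * logPoly β l}) ⟨max 1 ⌈y / B⌉₊, ?_⟩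
  set l := max 1 ⌈y / B⌉₊
  have hl1 : (1 : ℝ) ≤ l := by exact_mod_cast le_max_left 1 ⌈y / B⌉₊
  have hyl : y / B ≤ l := (Nat.le_ceil _).trans (by exact_mod_cast le_max_right 1 ⌈y / B⌉₊)
  have hlog : 1 ≤ log (l + 2) ^ β := one_le_rpow (one_le_log_of_three_le (by linarith)) hβ
  calc y = B * (y / B) := (mul_div_cancel₀ _ hB.ne').symm
    _ ≤ B * ((l + 1) * 1) := by gcongr; linarith
    _ ≤ B * logPoly β l := by unfold logPoly; gcongr

lemma le_mul_logPoly_of_le (hβ : 0 ≤ β) {B C y x : ℝ} (hB : 0 < B) (hy : 1 < y)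
    (hLs : log y ^ β ≤ √y) (hC : 1 ≤ C) (hBC : 2 ^ β ≤ B * C) (hx : C * (y / log y ^ β) ≤ x) :
    y ≤ B * logPoly β x := by
  have hL : 0 < log y ^ β := rpow_pos_of_pos (log_pos hy) β
  have hsqrt := sqrt_le_div_log_rpow hy hLs
  have hyx : y / log y ^ β ≤ x := (le_mul_of_one_le_left (by positivity) hC).trans hx
  have hlog := log_rpow_le_two_rpow_mul_log_rpow hβ hy.le (show √y ≤ x + 2 by linarith)
  have hx0 : 0 ≤ x := (by positivity : 0 ≤ y / log y ^ β).trans hyx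
  refine le_of_mul_le_mul_right ?_ (rpow_pos_of_pos two_pos β)
  calc y * 2 ^ β ≤ y * (B * C) := by gcongr
    _ = B * (C * (y / log y ^ β)) * log y ^ β := by field_simp
    _ ≤ B * x * (2 ^ β * log (x + 2) ^ β) := by gcongr
    _ ≤ B * (x + 1) * (2 ^ β * log (x + 2) ^ β) := by
        have := log_add_two_pos hx0
        gcongr
        linarith
    _ = B * logPoly β x * 2 ^ β := by unfold logPoly; ring

lemma effectiveDim_le (hβ : 0 ≤ β) {B y : ℝ} (hB : 0 < B) (hy : 1 < y)
    (hLs : log y ^ β ≤ √y) : (effectiveDim β B y : ℝ) ≤ (2 ^ β / B + 2) * y / log y ^ β := by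
  set C := 2 ^ β / B + 1
  have hC : 1 ≤ C := le_add_of_nonneg_left (by positivity)
  have hBC : 2 ^ β ≤ B * C := by rw [mul_add, mul_div_cancel₀ _ hB.ne']; linarith
  have hyL : 1 ≤ y / log y ^ β := (one_le_sqrt.2 hy.le).trans (sqrt_le_div_log_rpow hy hLs)
  calc (effectiveDim β B y : ℝ) ≤ ⌈C * (y / log y ^ β)⌉₊ := by
        exact_mod_cast Nat.sInf_le (le_mul_logPoly_of_le hβ hB hy hLs hC hBC (Nat.le_ceil _))
    _ ≤ (C + 1) * (y / log y ^ β) := natCeil_mul_le_add_one_mul (by positivity) hyL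
    _ = (2 ^ β / B + 2) * y / log y ^ β := by ring

lemma le_add_one_or_lt_of_le_mul_logPoly (hβ : 0 ≤ β) {B y x : ℝ} (hB : 0 < B) (hy : 1 < y)
    (hx : 0 ≤ x) (h : y ≤ B * logPoly β x) : y / (B * log y ^ β) ≤ x + 1 ∨ y < x + 2 := by
  refine (lt_or_ge y (x + 2)).elim Or.inr fun hxy => Or.inl ?_
  have hL := rpow_pos_of_pos (log_pos hy) β
  rw [div_le_iff₀ (by positivity)]
  calc y ≤ B * logPoly β x := h
    _ ≤ B * ((x + 1) * log y ^ β) := by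
        have := log_add_two_pos hx
        unfold logPoly
        gcongr
    _ = (x + 1) * (B * log y ^ β) := by ring

lemma le_effectiveDim (hβ : 0 ≤ β) {B c : ℝ} (hB : 0 < B) (hc : c ≤ 1 / 2)
    (hcB : c ≤ 1 / (2 * B)) {n : ℕ} (hn : 3 ≤ n) (hLs : log n ^ β ≤ √n) (hBs : 2 * B ≤ √n) :
    c * n / log n ^ β ≤ effectiveDim β B n := by
  set k := effectiveDim β B n
  have hn' : (3 : ℝ) ≤ n := by exact_mod_cast hn
  have hL1 : 1 ≤ log n ^ β := one_le_rpow (one_le_log_of_three_le hn') hβ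
  have hBL : 2 * B * log n ^ β ≤ n := calc
    2 * B * log n ^ β ≤ √n * √n := mul_le_mul hBs hLs (by positivity) (sqrt_nonneg _)
    _ = n := mul_self_sqrt n.cast_nonneg
  rcases le_add_one_or_lt_of_le_mul_logPoly hβ hB (by linarith) k.cast_nonneg
    (le_mul_logPoly_effectiveDim hβ hB n) with h | h
  · have hq : 2 ≤ n / (B * log n ^ β) := by
      rw [le_div_iff₀ (by positivity)]; linarith
    calc c * n / log n ^ β ≤ 1 / (2 * B) * n / log n ^ β := by gcongr
      _ = n / (B * log n ^ β) / 2 := by field_simp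
      _ ≤ k := by linarith
  · have hnk : n < k + 2 := by exact_mod_cast h
    have hnk' : (n : ℝ) ≤ k + 1 := by exact_mod_cast Nat.lt_succ_iff.mp hnk
    calc c * n / log n ^ β ≤ 1 / 2 * n / 1 := by gcongr
      _ ≤ k := by linarith

/-- For the inverse log-polynomial spectrum `λ_k = 1/(k log^β(k+1))` with
`β > 1` (here `lam l = λ_{l+1}`), the effective dimension
`k₁(n) = min{l ≥ 0 : λ_{l+1} ≤ c₁ S / n}` is `Θ(n / log^β n)`. -/
theorem inverse_log_polynomial_k1 (β : ℝ) (hβ : 1 < β) (c₁ : ℝ) (hc₁ : 0 < c₁)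
    (lam : ℕ → ℝ)
    (hlam : ∀ l : ℕ, lam l =
      1 / (((l : ℝ) + 1) * (Real.log ((l : ℝ) + 2)) ^ β))
    (k₁ : ℕ → ℕ)
    (hk₁ : ∀ n, k₁ n = sInf {l : ℕ | lam l ≤ c₁ * (∑' i, lam i) / n}) :
    ∃ c C : ℝ, 0 < c ∧ c < C ∧ ∃ N : ℕ, ∀ n ≥ N,
      c * (n : ℝ) / (Real.log n) ^ β ≤ (k₁ n : ℝ) ∧
      (k₁ n : ℝ) ≤ C * (n : ℝ) / (Real.log n) ^ β := by
  have hβ0 : 0 ≤ β := by linarith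
  obtain rfl : lam = fun l : ℕ => 1 / logPoly β l := funext hlam
  set B := c₁ * ∑' l : ℕ, 1 / logPoly β l
  have hB : 0 < B := mul_pos hc₁ (tsum_one_div_logPoly_pos hβ)
  have hk₁B : ∀ n : ℕ, 0 < n → k₁ n = effectiveDim β B n := fun n hn => by
    rw [hk₁, effectiveDim]
    congr 1
    ext l
    exact one_div_logPoly_le_div_iff (by exact_mod_cast hn) l.cast_nonneg
  refine ⟨min (1 / 2) (1 / (2 * B)), 2 ^ β / B + 2, by positivity, ?_, eventually_atTop.mp ?_⟩
  · have : 0 ≤ 2 ^ β / B := by positivity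
    linarith [min_le_left (1 / 2 : ℝ) (1 / (2 * B))]
  filter_upwards [eventually_ge_atTop 3,
    tendsto_natCast_atTop_atTop.eventually (eventually_log_rpow_le_sqrt β),
    (tendsto_sqrt_atTop.comp tendsto_natCast_atTop_atTop).eventually_ge_atTop (2 * B)]
    with n hn hLs hBs
  rw [hk₁B n (by omega)]
  exact ⟨le_effectiveDim hβ0 hB (min_le_left _ _) (min_le_right _ _) hn hLs hBs,
    effectiveDim_le hβ0 hB (by exact_mod_cast (by omega : 1 < n)) hLs⟩
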